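/- arXiv:quant-ph/0208111 — 2 statements merged into one kernel-verified Lean document; each statement's English description precedes it below -/
import Mathlib

section
/- For a unit vector ψ in G ⊗ H with reduced density matrices ρ = Tr_H(|ψ⟩⟨ψ|) and σ = Tr_G(|ψ⟩⟨ψ|), the von Neumann entropies coincide: S(ρ) = S(σ), where S(τ) = −Tr(τ log τ). -/
open Matrix Kronecker ComplexOrder

/-- Matrix logarithm via functional calculus on the support
(zero eigenvalues are sent to zero since `Real.log 0 = 0`). -/
noncomputable def matLog {n : Type*} [Fintype n] [DecidableEq n] (τ : Matrix n n ℂ) :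
    Matrix n n ℂ :=
  if h : τ.IsHermitian then
    (h.eigenvectorUnitary : Matrix n n ℂ) *
      Matrix.diagonal (fun i => (Real.log (h.eigenvalues i) : ℂ)) *
      star (h.eigenvectorUnitary : Matrix n n ℂ)
  else 0

/-- von Neumann entropy `S(τ) = -Tr (τ log τ)`. -/
noncomputable def vnEntropy {n : Type*} [Fintype n] [DecidableEq n] (τ : Matrix n n ℂ) : ℝ :=
  -(τ * matLog τ).trace.re

/-- Quantum relative entropy `R(ω:φ) = Tr (ω (log ω - log φ))` (logs on supports). -/
noncomputable def relEntropy {n : Type*} [Fintype n] [DecidableEq n]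
    (ω φ : Matrix n n ℂ) : ℝ :=
  ((ω * (matLog ω - matLog φ)).trace).re

/-- A density matrix: positive semidefinite with unit trace. -/
def IsDensity {n : Type*} [Fintype n] (τ : Matrix n n ℂ) : Prop :=
  τ.PosSemidef ∧ τ.trace = 1

/-- Partial trace over the second tensor factor. -/
noncomputable def ptrace2 {m n : Type*} [Fintype n]
    (ω : Matrix (m × n) (m × n) ℂ) : Matrix m m ℂ :=
  fun i j => ∑ k : n, ω (i, k) (j, k)

/-- Partial trace over the first tensor factor. -/
noncomputable def ptrace1 {m n : Type*} [Fintype m]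
    (ω : Matrix (m × n) (m × n) ℂ) : Matrix n n ℂ :=
  fun k l => ∑ i : m, ω (i, k) (i, l)

/-- Quantum mutual information `I(ω) = R(ω : ρ ⊗ σ)` of a bipartite state. -/
noncomputable def mutualInfo {m n : Type*} [Fintype m] [Fintype n] [DecidableEq m] [DecidableEq n]
    (ω : Matrix (m × n) (m × n) ℂ) : ℝ :=
  relEntropy ω (ptrace2 ω ⊗ₖ ptrace1 ω)


open Polynomial in
private lemma vnEntropy_eq_sum {n : Type*} [Fintype n] [DecidableEq n] {τ : Matrix n n ℂ}
    (h : τ.IsHermitian) :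
    vnEntropy τ = -∑ i, h.eigenvalues i * Real.log (h.eigenvalues i) := by
  have key : (τ * matLog τ).trace
      = ∑ i, ((h.eigenvalues i : ℂ) * (Real.log (h.eigenvalues i) : ℂ)) := by
    rw [matLog, dif_pos h]
    set U := (h.eigenvectorUnitary : Matrix n n ℂ) with hUdef
    set Δ := Matrix.diagonal (fun i => (Real.log (h.eigenvalues i) : ℂ)) with hΔ
    have assoc : τ * (U * Δ * star U) = (τ * U * Δ) * star U := by
      simp [Matrix.mul_assoc]
    rw [assoc, Matrix.trace_mul_comm]
    have h2 : star U * (τ * U * Δ) = (star U * τ * U) * Δ := by simp [Matrix.mul_assoc]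
    rw [h2, (by simpa using h.conjStarAlgAut_star_eigenvectorUnitary :
      star U * τ * U = Matrix.diagonal (RCLike.ofReal ∘ h.eigenvalues)), hΔ, Matrix.diagonal_mul_diagonal,
      Matrix.trace_diagonal]
    rfl
  unfold vnEntropy
  rw [key, Complex.re_sum, neg_inj]
  apply Finset.sum_congr rfl
  intro i _
  rw [← Complex.ofReal_mul, Complex.ofReal_re]

private lemma det_char {n : Type*} [Fintype n] [DecidableEq n] {τ : Matrix n n ℂ}
    (h : τ.IsHermitian) (x : ℂ) :
    Matrix.det (x • 1 - τ) = ∏ i, (x - (h.eigenvalues i : ℂ)) := by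
  set U := (h.eigenvectorUnitary : Matrix n n ℂ) with hUdef
  have hU : U * star U = 1 := Matrix.mem_unitaryGroup_iff.mp h.eigenvectorUnitary.2
  have h1 : x • (1 : Matrix n n ℂ) - τ
      = U * (x • 1 - Matrix.diagonal (RCLike.ofReal ∘ h.eigenvalues)) * star U := by
    rw [Matrix.mul_sub, Matrix.sub_mul]
    congr 1
    · rw [Matrix.mul_smul, Matrix.smul_mul, Matrix.mul_one, hU]
    · exact h.spectral_theorem
  rw [h1, Matrix.det_mul, Matrix.det_mul, mul_comm (Matrix.det U), mul_assoc,
    ← Matrix.det_mul, hU, Matrix.det_one, mul_one]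
  have h2 : x • (1 : Matrix n n ℂ) - Matrix.diagonal (RCLike.ofReal ∘ h.eigenvalues)
      = Matrix.diagonal (fun i => x - (h.eigenvalues i : ℂ)) := by
    ext i j
    by_cases hij : i = j <;>
      simp [Matrix.sub_apply, Matrix.smul_apply, Matrix.one_apply, Matrix.diagonal_apply,
        Function.comp, hij]
  rw [h2, Matrix.det_diagonal]

private lemma det_WA {I J : Type*} [Fintype I] [Fintype J] [DecidableEq I] [DecidableEq J]
    (A : Matrix I J ℂ) (B : Matrix J I ℂ) {x : ℂ} (hx : x ≠ 0) :
    Matrix.det (x • 1 - A * B) * x ^ (Fintype.card J)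
      = Matrix.det (x • 1 - B * A) * x ^ (Fintype.card I) := by
  have h1 : x • (1 : Matrix I I ℂ) - A * B = x • (1 + (-(x⁻¹ • A)) * B) := by
    rw [smul_add, Matrix.neg_mul, smul_neg, Matrix.smul_mul, smul_smul,
      mul_inv_cancel₀ hx, one_smul]
    abel
  have h2 : x • (1 : Matrix J J ℂ) - B * A = x • (1 + B * (-(x⁻¹ • A))) := by
    rw [smul_add, Matrix.mul_neg, smul_neg, Matrix.mul_smul, smul_smul,
      mul_inv_cancel₀ hx, one_smul]
    abel
  rw [h1, h2, Matrix.det_smul, Matrix.det_smul, Matrix.det_one_add_mul_comm]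
  ring

open Polynomial in
private lemma sum_eig_eq {I J : Type*} [Fintype I] [Fintype J] [DecidableEq I] [DecidableEq J]
    {τ₁ : Matrix I I ℂ} {τ₂ : Matrix J J ℂ} (h₁ : τ₁.IsHermitian) (h₂ : τ₂.IsHermitian)
    (hdet : ∀ x : ℂ, x ≠ 0 → Matrix.det (x • 1 - τ₁) * x ^ (Fintype.card J)
      = Matrix.det (x • 1 - τ₂) * x ^ (Fintype.card I))
    (f : ℝ → ℝ) (hf : f 0 = 0) :
    ∑ i, f (h₁.eigenvalues i) = ∑ j, f (h₂.eigenvalues j) := by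
  classical
  set s : Multiset ℂ :=
    (Finset.univ.val.map (fun i => (h₁.eigenvalues i : ℂ)))
      + Multiset.replicate (Fintype.card J) 0 with hs
  set t : Multiset ℂ :=
    (Finset.univ.val.map (fun j => (h₂.eigenvalues j : ℂ)))
      + Multiset.replicate (Fintype.card I) 0 with ht
  have heval : ∀ (u : Multiset ℂ) (x : ℂ),
      ((u.map fun c => X - C c).prod).eval x = (u.map fun c => x - c).prod := by
    intro u x
    rw [eval_multiset_prod, Multiset.map_map]
    congr 1
    apply Multiset.map_congr rfl
    intro c _
    simp
  have hPQ : ((s.map fun c => X - C c).prod) = ((t.map fun c => X - C c).prod) := by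
    apply eq_of_infinite_eval_eq
    apply Set.Infinite.mono (s := {x : ℂ | x ≠ 0})
    · intro x hx
      have hx' : x ≠ 0 := hx
      simp only [Set.mem_setOf_eq]
      rw [heval, heval, hs, ht, Multiset.map_add, Multiset.prod_add,
        Multiset.map_add, Multiset.prod_add, Multiset.map_map, Multiset.map_map,
        Multiset.map_replicate, Multiset.map_replicate, Multiset.prod_replicate,
        Multiset.prod_replicate]
      simp only [sub_zero, Function.comp]
      have e1 : (Finset.univ.val.map fun i => x - (h₁.eigenvalues i : ℂ)).prod
          = ∏ i, (x - (h₁.eigenvalues i : ℂ)) := rfl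
      have e2 : (Finset.univ.val.map fun j => x - (h₂.eigenvalues j : ℂ)).prod
          = ∏ j, (x - (h₂.eigenvalues j : ℂ)) := rfl
      rw [e1, e2, ← det_char h₁ x, ← det_char h₂ x]
      exact hdet x hx'
    · have hfin : ({(0 : ℂ)} : Set ℂ).Finite := Set.finite_singleton 0
      have hinf := hfin.infinite_compl
      convert hinf using 1
      ext x
      simp
  have hst : s = t := by
    rw [← Polynomial.roots_multiset_prod_X_sub_C s, ← Polynomial.roots_multiset_prod_X_sub_C t,
      hPQ]
  have hsum := congrArg (fun u : Multiset ℂ => ((u.map fun z => f z.re).sum)) hst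
  simp only [hs, ht, Multiset.map_add, Multiset.sum_add, Multiset.map_map,
    Multiset.map_replicate, Multiset.sum_replicate, Function.comp, Complex.ofReal_re,
    Complex.zero_re, hf, smul_zero, add_zero] at hsum
  rw [Finset.sum_eq_multiset_sum, Finset.sum_eq_multiset_sum]
  exact hsum

theorem reduced_density_matrices_equal_entropy {m n : ℕ}
    (ψ : Fin m × Fin n → ℂ) (hψ : ∑ p, Complex.normSq (ψ p) = 1) :
    vnEntropy (ptrace2 (Matrix.vecMulVec ψ (star ψ)))
      = vnEntropy (ptrace1 (Matrix.vecMulVec ψ (star ψ))) := by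
  classical
  set A : Matrix (Fin m) (Fin n) ℂ := Matrix.of (fun i k => ψ (i, k)) with hA
  have hρ : ptrace2 (Matrix.vecMulVec ψ (star ψ)) = A * Aᴴ := by
    ext i j
    simp [ptrace2, Matrix.vecMulVec_apply, Matrix.mul_apply, hA, mul_comm]
  have hσ : ptrace1 (Matrix.vecMulVec ψ (star ψ)) = Aᵀ * (Aᵀ)ᴴ := by
    ext k l
    simp [ptrace1, Matrix.vecMulVec_apply, Matrix.mul_apply, hA, mul_comm]
  have hHρ : (A * Aᴴ).IsHermitian := Matrix.isHermitian_mul_conjTranspose_self A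
  have hHσ : (Aᵀ * (Aᵀ)ᴴ).IsHermitian := Matrix.isHermitian_mul_conjTranspose_self Aᵀ
  have hσ' : Aᵀ * (Aᵀ)ᴴ = (Aᴴ * A)ᵀ := by
    ext k l
    simp [Matrix.mul_apply, mul_comm]
  have hdet : ∀ x : ℂ, x ≠ 0 →
      Matrix.det (x • 1 - A * Aᴴ) * x ^ (Fintype.card (Fin n))
        = Matrix.det (x • 1 - Aᵀ * (Aᵀ)ᴴ) * x ^ (Fintype.card (Fin m)) := by
    intro x hx
    have h1 := det_WA A Aᴴ hx
    have h2 : Matrix.det (x • 1 - Aᵀ * (Aᵀ)ᴴ) = Matrix.det (x • 1 - Aᴴ * A) := by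
      rw [hσ', ← Matrix.det_transpose (x • 1 - Aᴴ * A)]
      congr 1
      rw [Matrix.transpose_sub, Matrix.transpose_smul, Matrix.transpose_one]
    rw [h2]
    exact h1
  have hkey := sum_eig_eq hHρ hHσ hdet (fun r => r * Real.log r) (by simp)
  rw [hρ, hσ, vnEntropy_eq_sum hHρ, vnEntropy_eq_sum hHσ, hkey]
end

section
/- On the block-diagonal algebra B = ⊕_i M_{d_i}, the q-entropy H(σ) = Σ_i ϰ(i) log ϰ(i) − 2 Tr σ log σ over all block density matrices σ is bounded by log(dim B), where dim B = Σ_i d_i², and the maximum is attained at σ° = ⊕_i (d_i² / dim B)(1/d_i) I_{d_i}. -/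
open Matrix Kronecker ComplexOrder

/-- `-Tr σ log σ` for a block-diagonal density matrix given by its blocks. -/
noncomputable def blockS {k : ℕ} {d : Fin k → ℕ}
    (σs : ∀ i, Matrix (Fin (d i)) (Fin (d i)) ℂ) : ℝ :=
  -∑ i, ((σs i) * matLog (σs i)).trace.re

/-- The q-entropy `H(σ) = ∑ᵢ ϰ(i) log ϰ(i) - 2 Tr σ log σ` of a block density matrix. -/
noncomputable def blockH {k : ℕ} {d : Fin k → ℕ}
    (σs : ∀ i, Matrix (Fin (d i)) (Fin (d i)) ℂ) : ℝ :=
  (∑ i, (σs i).trace.re * Real.log (σs i).trace.re)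
    - 2 * ∑ i, ((σs i) * matLog (σs i)).trace.re

section Helpers

private lemma gibbs_aux {ι : Type*} (t : Finset ι) (p a : ι → ℝ)
    (hp : ∀ i ∈ t, 0 ≤ p i) (ha0 : ∀ i ∈ t, 0 ≤ a i)
    (ha : ∀ i ∈ t, p i ≠ 0 → 0 < a i) {κ : ℝ} (hκ : 0 < κ)
    (hsum : ∑ i ∈ t, p i = κ) :
    ∑ i ∈ t, (p i * Real.log (a i) - p i * Real.log (p i))
      ≤ κ * Real.log ((∑ i ∈ t, a i) / κ) := by
  classical
  set x : ι → ℝ := fun i => if p i = 0 then 1 else a i / p i with hx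
  have hxpos : ∀ i ∈ t, x i ∈ Set.Ioi (0:ℝ) := by
    intro i hi
    simp only [hx]
    split_ifs with h
    · exact Set.mem_Ioi.mpr one_pos
    · exact Set.mem_Ioi.mpr (div_pos (ha i hi h) (lt_of_le_of_ne (hp i hi) (Ne.symm h)))
  have hw0 : ∀ i ∈ t, 0 ≤ p i / κ := fun i hi => div_nonneg (hp i hi) hκ.le
  have hw1 : ∑ i ∈ t, p i / κ = 1 := by
    rw [← Finset.sum_div, hsum, div_self hκ.ne']
  have jensen := (strictConcaveOn_log_Ioi.concaveOn).le_map_sum hw0 hw1 hxpos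
  simp only [smul_eq_mul] at jensen
  have hLHS : ∑ i ∈ t, (p i / κ) * Real.log (x i)
      = (∑ i ∈ t, (p i * Real.log (a i) - p i * Real.log (p i))) / κ := by
    rw [Finset.sum_div]
    refine Finset.sum_congr rfl fun i hi => ?_
    by_cases h : p i = 0
    · simp [hx, h]
    · rw [hx]
      simp only [h, if_false]
      rw [Real.log_div (ha i hi h).ne' h]
      ring
  have hsx : ∑ i ∈ t, (p i / κ) * x i ≤ (∑ i ∈ t, a i) / κ := by
    rw [Finset.sum_div]
    apply Finset.sum_le_sum
    intro i hi
    by_cases h : p i = 0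
    · simp [hx, h]
      exact div_nonneg (ha0 i hi) hκ.le
    · rw [hx]; simp only [h, if_false]
      rw [div_mul_div_comm, mul_comm (p i), mul_comm κ (p i), ← div_div, mul_div_assoc,
        div_self h, mul_one]
  have hsxpos : 0 < ∑ i ∈ t, (p i / κ) * x i := by
    obtain ⟨i0, hi0, hpi0⟩ : ∃ i ∈ t, p i ≠ 0 := by
      by_contra hc
      push_neg at hc
      rw [Finset.sum_eq_zero hc] at hsum
      exact hκ.ne (hsum)
    have hterm : 0 < (p i0 / κ) * x i0 :=
      mul_pos (div_pos (lt_of_le_of_ne (hp i0 hi0) (Ne.symm hpi0)) hκ) (hxpos i0 hi0)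
    refine Finset.sum_pos' (fun i hi => mul_nonneg (hw0 i hi) (le_of_lt (hxpos i hi)))
      ⟨i0, hi0, hterm⟩
  have hlog : Real.log (∑ i ∈ t, (p i / κ) * x i) ≤ Real.log ((∑ i ∈ t, a i) / κ) :=
    Real.log_le_log hsxpos hsx
  rw [hLHS] at jensen
  have hfinal := le_trans jensen hlog
  calc ∑ i ∈ t, (p i * Real.log (a i) - p i * Real.log (p i))
      = κ * ((∑ i ∈ t, (p i * Real.log (a i) - p i * Real.log (p i))) / κ) := by
        field_simp
    _ ≤ κ * Real.log ((∑ i ∈ t, a i) / κ) := mul_le_mul_of_nonneg_left hfinal hκ.le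

private lemma conj_diag_trace {n : Type*} [Fintype n] [DecidableEq n]
    (U : Matrix.unitaryGroup n ℂ) (f : n → ℂ) :
    ((U : Matrix n n ℂ) * diagonal f * star (U : Matrix n n ℂ)).trace = ∑ i, f i := by
  rw [Matrix.trace_mul_cycle, Matrix.mem_unitaryGroup_iff'.mp U.2, one_mul, trace_diagonal]

private lemma trace_mul_matLog {n : Type*} [Fintype n] [DecidableEq n] {τ : Matrix n n ℂ}
    (h : τ.IsHermitian) :
    (τ * matLog τ).trace = ((∑ j, h.eigenvalues j * Real.log (h.eigenvalues j) : ℝ) : ℂ) := by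
  rw [matLog, dif_pos h]
  set V : Matrix.unitaryGroup n ℂ := h.eigenvectorUnitary with hV
  have h1 : (V : Matrix n n ℂ) * star (V : Matrix n n ℂ) = 1 :=
    Matrix.mem_unitaryGroup_iff.mp V.2
  have hDiag : star (V : Matrix n n ℂ) * τ * (V : Matrix n n ℂ)
      = diagonal (RCLike.ofReal ∘ h.eigenvalues) := by
    rw [← h.conjStarAlgAut_star_eigenvectorUnitary, Unitary.conjStarAlgAut_apply, Unitary.coe_star,
      star_star]
  have key : τ * ((V : Matrix n n ℂ) *
        diagonal (fun i => (Real.log (h.eigenvalues i) : ℂ)) * star (V : Matrix n n ℂ))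
      = (V : Matrix n n ℂ) * (star (V : Matrix n n ℂ) * τ * (V : Matrix n n ℂ) *
          diagonal (fun i => (Real.log (h.eigenvalues i) : ℂ))) * star (V : Matrix n n ℂ) := by
    simp only [← Matrix.mul_assoc]
    rw [h1, Matrix.one_mul]
  rw [key, hDiag, diagonal_mul_diagonal, conj_diag_trace]
  push_cast
  rfl

private lemma trace_eq_sum_eigenvalues {n : Type*} [Fintype n] [DecidableEq n]
    {τ : Matrix n n ℂ} (h : τ.IsHermitian) :
    τ.trace = ((∑ j, h.eigenvalues j : ℝ) : ℂ) := by
  have hh := congrArg Matrix.trace h.spectral_theorem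
  rw [Unitary.conjStarAlgAut_apply, conj_diag_trace] at hh
  rw [hh]
  push_cast
  rfl

private lemma isHermitian_real_smul_one {n : Type*} [Fintype n] [DecidableEq n] (c : ℝ) :
    (((c : ℂ) • 1 : Matrix n n ℂ)).IsHermitian := by
  unfold Matrix.IsHermitian
  rw [conjTranspose_smul, conjTranspose_one]
  simp

private lemma eigenvalues_real_smul_one {n : Type*} [Fintype n] [DecidableEq n] (c : ℝ)
    (h : (((c : ℂ) • 1 : Matrix n n ℂ)).IsHermitian) (j : n) : h.eigenvalues j = c := by
  have hU : star (h.eigenvectorUnitary : Matrix n n ℂ) * (h.eigenvectorUnitary : Matrix n n ℂ)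
      = 1 := Matrix.mem_unitaryGroup_iff'.mp h.eigenvectorUnitary.2
  have hD : diagonal (RCLike.ofReal ∘ h.eigenvalues) = ((c : ℂ) • 1 : Matrix n n ℂ) := by
    rw [← h.conjStarAlgAut_star_eigenvectorUnitary, Unitary.conjStarAlgAut_apply, Unitary.coe_star,
      star_star, Matrix.mul_smul, Matrix.smul_mul, mul_one, hU]
  have hjj := congrFun (congrFun hD j) j
  simp [diagonal] at hjj
  exact_mod_cast hjj

end Helpers

theorem blockH_le_log_dim {k : ℕ} {d : Fin k → ℕ}
    (σs : ∀ i, Matrix (Fin (d i)) (Fin (d i)) ℂ)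
    (hpos : ∀ i, (σs i).PosSemidef) (htr : ∑ i, (σs i).trace = 1) :
    blockH σs ≤ Real.log (∑ i, (d i : ℝ) ^ 2)
      ∧ blockH (fun i => ((d i : ℂ) / (∑ j, (d j : ℂ) ^ 2)) •
            (1 : Matrix (Fin (d i)) (Fin (d i)) ℂ))
          = Real.log (∑ i, (d i : ℝ) ^ 2) := by
  classical
  set D : ℝ := ∑ i, (d i : ℝ) ^ 2 with hD
  have hherm : ∀ i, (σs i).IsHermitian := fun i => (hpos i).1
  set eig : ∀ i, Fin (d i) → ℝ := fun i => (hherm i).eigenvalues with heig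
  have heignn : ∀ i j, 0 ≤ eig i j := fun i j => (hpos i).eigenvalues_nonneg j
  have hκ : ∀ i, (σs i).trace.re = ∑ j, eig i j := by
    intro i
    rw [trace_eq_sum_eigenvalues (hherm i)]
    simp
    rfl
  have hκnn : ∀ i, 0 ≤ (σs i).trace.re := fun i =>
    (hκ i) ▸ Finset.sum_nonneg (fun j _ => heignn i j)
  have hκsum : ∑ i, (σs i).trace.re = 1 := by
    have := congrArg Complex.re htr
    rwa [Complex.re_sum] at this
  have hT : ∀ i, ((σs i) * matLog (σs i)).trace.re
      = ∑ j, eig i j * Real.log (eig i j) := by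
    intro i
    rw [trace_mul_matLog (hherm i)]
    simp
    rfl
  have hdne : ∀ i, (σs i).trace.re ≠ 0 → (d i : ℝ) ≠ 0 := by
    intro i h hd
    apply h
    rw [hκ i]
    have hz : d i = 0 := by exact_mod_cast hd
    haveI : IsEmpty (Fin (d i)) := by rw [hz]; infer_instance
    simp
  have hDpos : 0 < D := by
    obtain ⟨i0, hi0⟩ : ∃ i, (σs i).trace.re ≠ 0 := by
      by_contra hc
      push_neg at hc
      rw [Finset.sum_eq_zero (fun i _ => hc i)] at hκsum
      exact one_ne_zero hκsum.symm
    have hd0 : (d i0 : ℝ) ≠ 0 := hdne i0 hi0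
    refine Finset.sum_pos' (fun i _ => sq_nonneg _) ⟨i0, Finset.mem_univ _, ?_⟩
    positivity
  constructor
  · -- the inequality
    have hstep : ∀ i, (σs i).trace.re * Real.log (σs i).trace.re
          - 2 * ((σs i) * matLog (σs i)).trace.re
        ≤ (σs i).trace.re * Real.log ((d i : ℝ) ^ 2)
          - (σs i).trace.re * Real.log ((σs i).trace.re) := by
      intro i
      by_cases hz : (σs i).trace.re = 0
      · have hall : ∀ j ∈ (Finset.univ : Finset (Fin (d i))), eig i j = 0 := by
          have hκ0 := hκ i
          rw [hz] at hκ0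
          exact fun j hj =>
            (Finset.sum_eq_zero_iff_of_nonneg (fun j _ => heignn i j)).mp hκ0.symm j hj
        have hT0 : ((σs i) * matLog (σs i)).trace.re = 0 := by
          rw [hT i]
          exact Finset.sum_eq_zero fun j hj => by rw [hall j hj]; simp
        rw [hz, hT0]; simp
      · have hκpos : 0 < (σs i).trace.re := lt_of_le_of_ne (hκnn i) (Ne.symm hz)
        have hgib := gibbs_aux (Finset.univ : Finset (Fin (d i))) (eig i) (fun _ => (1:ℝ))
          (fun j _ => heignn i j) (fun _ _ => zero_le_one) (fun _ _ _ => one_pos)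
          hκpos (hκ i).symm
        have hsum1 : ∑ _j : Fin (d i), (1:ℝ) = (d i : ℝ) := by simp
        rw [hsum1] at hgib
        simp only [Real.log_one, mul_zero, zero_sub] at hgib
        have hlogdiv : Real.log ((d i : ℝ) / (σs i).trace.re)
            = Real.log (d i : ℝ) - Real.log ((σs i).trace.re) :=
          Real.log_div (hdne i hz) hz
        rw [hlogdiv] at hgib
        have hTle : -((σs i) * matLog (σs i)).trace.re
            ≤ (σs i).trace.re * (Real.log (d i : ℝ) - Real.log ((σs i).trace.re)) := by
          have hneg : ∑ j, -(eig i j * Real.log (eig i j))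
              = -((σs i) * matLog (σs i)).trace.re := by
            rw [hT i, ← Finset.sum_neg_distrib]
          rw [← hneg]
          exact hgib
        have hlogsq : Real.log ((d i : ℝ) ^ 2) = 2 * Real.log (d i : ℝ) := by
          rw [Real.log_pow]; norm_num
        rw [hlogsq]
        nlinarith [hTle]
    have hsum_step : blockH σs ≤ ∑ i, ((σs i).trace.re * Real.log ((d i : ℝ) ^ 2)
        - (σs i).trace.re * Real.log ((σs i).trace.re)) := by
      rw [blockH]
      rw [show (∑ i, (σs i).trace.re * Real.log (σs i).trace.re)
            - 2 * ∑ i, ((σs i) * matLog (σs i)).trace.re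
          = ∑ i, ((σs i).trace.re * Real.log (σs i).trace.re
              - 2 * ((σs i) * matLog (σs i)).trace.re) by
        rw [Finset.sum_sub_distrib, Finset.mul_sum]]
      exact Finset.sum_le_sum fun i _ => hstep i
    have hgib2 := gibbs_aux (Finset.univ : Finset (Fin k)) (fun i => (σs i).trace.re)
      (fun i => (d i : ℝ) ^ 2) (fun i _ => hκnn i) (fun i _ => sq_nonneg _)
      (fun i _ h => by have := hdne i h; positivity) one_pos hκsum
    rw [div_one, one_mul] at hgib2
    exact le_trans hsum_step hgib2
  · -- the equality at σ°
    set Dc : ℂ := ∑ j, (d j : ℂ) ^ 2 with hDc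
    have hcast : ∀ i, ((d i : ℂ) / Dc) = (((d i : ℝ) / D : ℝ) : ℂ) := by
      intro i
      rw [hDc, hD]
      push_cast
      ring
    have hDne : D ≠ 0 := hDpos.ne'
    have hTr : ∀ i, ((((d i : ℂ) / Dc) • (1 : Matrix (Fin (d i)) (Fin (d i)) ℂ)).trace).re
        = (d i : ℝ) ^ 2 / D := by
      intro i
      rw [hcast i, Matrix.trace_smul, Matrix.trace_one]
      simp only [smul_eq_mul]
      rw [show ((((d i : ℝ) / D : ℝ) : ℂ) * (Fintype.card (Fin (d i)) : ℂ))
          = ((((d i : ℝ) / D) * (Fintype.card (Fin (d i)) : ℝ) : ℝ) : ℂ) by push_cast; ring]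
      rw [Complex.ofReal_re, Fintype.card_fin]
      ring
    have hTT : ∀ i, (((((d i : ℂ) / Dc) • (1 : Matrix (Fin (d i)) (Fin (d i)) ℂ)) *
          matLog (((d i : ℂ) / Dc) • 1)).trace).re
        = (d i : ℝ) * ((d i : ℝ) / D * Real.log ((d i : ℝ) / D)) := by
      intro i
      rw [hcast i]
      rw [trace_mul_matLog (isHermitian_real_smul_one ((d i : ℝ) / D))]
      rw [Complex.ofReal_re]
      rw [Finset.sum_congr rfl (fun j _ => by
        rw [eigenvalues_real_smul_one ((d i : ℝ) / D) _ j])]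
      simp [mul_comm]
    rw [blockH]
    simp only [hTr, hTT]
    have hper : ∀ i, ((d i : ℝ) ^ 2 / D) * Real.log ((d i : ℝ) ^ 2 / D)
        - 2 * ((d i : ℝ) * ((d i : ℝ) / D * Real.log ((d i : ℝ) / D)))
        = (d i : ℝ) ^ 2 / D * Real.log D := by
      intro i
      by_cases hd : (d i : ℝ) = 0
      · rw [hd]; simp
      · rw [Real.log_div (by positivity) hDne, Real.log_div hd hDne, Real.log_pow]
        push_cast
        ring
    rw [show (∑ i, ((d i : ℝ) ^ 2 / D) * Real.log ((d i : ℝ) ^ 2 / D))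
          - 2 * ∑ i, ((d i : ℝ) * ((d i : ℝ) / D * Real.log ((d i : ℝ) / D)))
        = ∑ i, (((d i : ℝ) ^ 2 / D) * Real.log ((d i : ℝ) ^ 2 / D)
            - 2 * ((d i : ℝ) * ((d i : ℝ) / D * Real.log ((d i : ℝ) / D)))) by
      rw [Finset.sum_sub_distrib, Finset.mul_sum]]
    rw [Finset.sum_congr rfl (fun i _ => hper i)]
    rw [← Finset.sum_mul, ← Finset.sum_div, ← hD, div_self hDne, one_mul]
end
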